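/- (FTL regret equals its mixability gap and is bounded by leader changes) For losses in [0,1]^K, Follow-the-Leader (uniform weights on the current leaders {k : L_{t-1,k} = L*_{t-1}}) has regret R_T = Δ_T^{(∞)} ≤ C_T, where C_T is the number of rounds t such that t = 1 or some expert k has L_{t-1,k} = L*_{t-1} but L_{t,k} ≠ L*_t. -/

import Mathlib

open Finset

noncomputable section

/-- Cumulative losses: `L t k = ∑_{s < t} ℓ s k` (so `L 0 = 0`). -/
def cumLoss {K : ℕ} (ℓ : ℕ → Fin K → ℝ) (t : ℕ) (k : Fin K) : ℝ :=
  ∑ s ∈ Finset.range t, ℓ s k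

/-- `L* = min_k L k`. -/
def bestLoss {K : ℕ} [NeZero K] (L : Fin K → ℝ) : ℝ :=
  Finset.univ.inf' ⟨⟨0, Nat.pos_of_ne_zero (NeZero.ne K)⟩, Finset.mem_univ _⟩ L

/-- The set of current leaders. -/
def leaders {K : ℕ} [NeZero K] (L : Fin K → ℝ) : Finset (Fin K) :=
  Finset.univ.filter fun k => L k = bestLoss L

/-- Hedge weights at round `t` (rounds indexed `0,…,T-1`), given the cumulative mixability
gap `D = Δ_{t-1}` accrued so far, i.e. with learning rate `η_t = ln K / D`; the case
`D = 0` corresponds to `η_t = ∞`, giving uniform weights on the current leaders (FTL). -/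
def wts {K : ℕ} [NeZero K] (ℓ : ℕ → Fin K → ℝ) (t : ℕ) (D : ℝ) (k : Fin K) : ℝ :=
  if D = 0 then
    (if k ∈ leaders (cumLoss ℓ t) then ((leaders (cumLoss ℓ t)).card : ℝ)⁻¹ else 0)
  else
    Real.exp (-(Real.log K / D) * cumLoss ℓ t k) /
      ∑ j, Real.exp (-(Real.log K / D) * cumLoss ℓ t j)

/-- Hedge loss `h_t = w_t · ℓ_t`. -/
def hloss {K : ℕ} [NeZero K] (ℓ : ℕ → Fin K → ℝ) (t : ℕ) (D : ℝ) : ℝ :=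
  ∑ k, wts ℓ t D k * ℓ t k

/-- Cumulative mix loss of Hedge with constant rate `η` and uniform prior. -/
def Mconst {K : ℕ} (ℓ : ℕ → Fin K → ℝ) (η : ℝ) (t : ℕ) : ℝ :=
  -(1/η) * Real.log ((1 / (K : ℝ)) * ∑ k, Real.exp (-η * cumLoss ℓ t k))

/-- Per-round mix loss `m_t = -(1/η_t)·ln(∑ₖ w_{t,k} e^{-η_t ℓ_{t,k}})` at rate
`η_t = ln K / D`, written in telescoped form; for `D = 0` (i.e. `η_t = ∞`) it equals
`L*_t - L*_{t-1}`. -/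
def mloss {K : ℕ} [NeZero K] (ℓ : ℕ → Fin K → ℝ) (t : ℕ) (D : ℝ) : ℝ :=
  if D = 0 then bestLoss (cumLoss ℓ (t+1)) - bestLoss (cumLoss ℓ t)
  else Mconst ℓ (Real.log K / D) (t+1) - Mconst ℓ (Real.log K / D) t

/-- Mixability gap `δ_t = h_t - m_t`. -/
def mixGap {K : ℕ} [NeZero K] (ℓ : ℕ → Fin K → ℝ) (t : ℕ) (D : ℝ) : ℝ :=
  hloss ℓ t D - mloss ℓ t D

/-- AdaHedge's cumulative mixability gap `Δ_t`, defined recursively: `Δ_0 = 0` and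
`Δ_{t+1} = Δ_t + δ_{t+1}`, where round `t+1` uses learning rate `η = ln K / Δ_t`
(interpreted as `∞` when `Δ_t = 0`). -/
def ahDelta {K : ℕ} [NeZero K] (ℓ : ℕ → Fin K → ℝ) : ℕ → ℝ
  | 0 => 0
  | (t+1) => ahDelta ℓ t + mixGap ℓ t (ahDelta ℓ t)

/-- Loss variance `v_t = ∑ₖ w_{t,k}(ℓ_{t,k} - h_t)²`. -/
def vvar {K : ℕ} [NeZero K] (ℓ : ℕ → Fin K → ℝ) (t : ℕ) (D : ℝ) : ℝ :=
  ∑ k, wts ℓ t D k * (ℓ t k - hloss ℓ t D)^2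


section Aux

variable {K : ℕ} [NeZero K] (ℓ : ℕ → Fin K → ℝ)

lemma bestLoss_le {K : ℕ} [NeZero K] (L : Fin K → ℝ) (k : Fin K) : bestLoss L ≤ L k :=
  Finset.inf'_le _ (Finset.mem_univ k)

lemma leaders_nonempty {K : ℕ} [NeZero K] (L : Fin K → ℝ) : (leaders L).Nonempty := by
  obtain ⟨k, -, hk⟩ := Finset.exists_mem_eq_inf' (s := (Finset.univ : Finset (Fin K)))
    ⟨⟨0, Nat.pos_of_ne_zero (NeZero.ne K)⟩, Finset.mem_univ _⟩ L
  exact ⟨k, Finset.mem_filter.mpr ⟨Finset.mem_univ _, hk.symm⟩⟩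

omit [NeZero K] in
lemma cumLoss_succ (t : ℕ) (k : Fin K) :
    cumLoss ℓ (t+1) k = cumLoss ℓ t k + ℓ t k := by
  simp [cumLoss, Finset.sum_range_succ]

lemma hloss_zero (t : ℕ) :
    hloss ℓ t 0 = ((leaders (cumLoss ℓ t)).card : ℝ)⁻¹ *
      ∑ k ∈ leaders (cumLoss ℓ t), ℓ t k := by
  have h : ∀ k ∈ Finset.univ, wts ℓ t 0 k * ℓ t k =
      if k ∈ leaders (cumLoss ℓ t) then ((leaders (cumLoss ℓ t)).card : ℝ)⁻¹ * ℓ t k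
      else 0 := by
    intro k _
    by_cases hk : k ∈ leaders (cumLoss ℓ t) <;> simp [wts, hk]
  rw [hloss, Finset.sum_congr rfl h, Finset.sum_ite_mem, Finset.univ_inter, Finset.mul_sum]

lemma mloss_zero (t : ℕ) :
    mloss ℓ t 0 = bestLoss (cumLoss ℓ (t+1)) - bestLoss (cumLoss ℓ t) := by
  simp [mloss]

lemma mloss_zero_nonneg (hℓ : ∀ t k, ℓ t k ∈ Set.Icc (0 : ℝ) 1) (t : ℕ) :
    0 ≤ mloss ℓ t 0 := by
  rw [mloss_zero, sub_nonneg]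
  obtain ⟨k, -, hk⟩ := Finset.exists_mem_eq_inf' (s := (Finset.univ : Finset (Fin K)))
    ⟨⟨0, Nat.pos_of_ne_zero (NeZero.ne K)⟩, Finset.mem_univ _⟩ (cumLoss ℓ (t+1))
  calc bestLoss (cumLoss ℓ t) ≤ cumLoss ℓ t k := bestLoss_le _ k
    _ ≤ cumLoss ℓ (t+1) k := by
        rw [cumLoss_succ]; linarith [(hℓ t k).1]
    _ = bestLoss (cumLoss ℓ (t+1)) := hk.symm

lemma mloss_le_of_leader (t : ℕ) (k : Fin K) (hk : k ∈ leaders (cumLoss ℓ t)) :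
    mloss ℓ t 0 ≤ ℓ t k := by
  rw [mloss_zero]
  have hkb : cumLoss ℓ t k = bestLoss (cumLoss ℓ t) := by
    simpa [leaders] using hk
  have := bestLoss_le (cumLoss ℓ (t+1)) k
  rw [cumLoss_succ, hkb] at this
  linarith

lemma hloss_zero_le_one (hℓ : ∀ t k, ℓ t k ∈ Set.Icc (0 : ℝ) 1) (t : ℕ) :
    hloss ℓ t 0 ≤ 1 := by
  rw [hloss_zero]
  have hne := leaders_nonempty (cumLoss ℓ t)
  have hc : (0 : ℝ) < (leaders (cumLoss ℓ t)).card := by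
    exact_mod_cast Finset.card_pos.mpr hne
  have hsum : ∑ k ∈ leaders (cumLoss ℓ t), ℓ t k ≤ (leaders (cumLoss ℓ t)).card := by
    calc ∑ k ∈ leaders (cumLoss ℓ t), ℓ t k ≤ ∑ k ∈ leaders (cumLoss ℓ t), 1 :=
          Finset.sum_le_sum fun k _ => (hℓ t k).2
      _ = (leaders (cumLoss ℓ t)).card := by simp
  calc ((leaders (cumLoss ℓ t)).card : ℝ)⁻¹ * ∑ k ∈ leaders (cumLoss ℓ t), ℓ t k
      ≤ ((leaders (cumLoss ℓ t)).card : ℝ)⁻¹ * (leaders (cumLoss ℓ t)).card := by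
        exact mul_le_mul_of_nonneg_left hsum (by positivity)
    _ = 1 := inv_mul_cancel₀ hc.ne'

lemma mloss_le_hloss (t : ℕ) : mloss ℓ t 0 ≤ hloss ℓ t 0 := by
  rw [hloss_zero]
  have hne := leaders_nonempty (cumLoss ℓ t)
  have hc : (0 : ℝ) < (leaders (cumLoss ℓ t)).card := by
    exact_mod_cast Finset.card_pos.mpr hne
  have hsum : ((leaders (cumLoss ℓ t)).card : ℝ) * mloss ℓ t 0
      ≤ ∑ k ∈ leaders (cumLoss ℓ t), ℓ t k := by
    calc ((leaders (cumLoss ℓ t)).card : ℝ) * mloss ℓ t 0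
        = ∑ _k ∈ leaders (cumLoss ℓ t), mloss ℓ t 0 := by simp [Finset.sum_const, mul_comm]
      _ ≤ ∑ k ∈ leaders (cumLoss ℓ t), ℓ t k :=
          Finset.sum_le_sum fun k hk => mloss_le_of_leader ℓ t k hk
  calc mloss ℓ t 0
      = ((leaders (cumLoss ℓ t)).card : ℝ)⁻¹ *
        (((leaders (cumLoss ℓ t)).card : ℝ) * mloss ℓ t 0) := by
        field_simp
    _ ≤ _ := mul_le_mul_of_nonneg_left hsum (by positivity)

lemma mixGap_zero_of_no_change (t : ℕ)
    (h : ∀ k : Fin K, cumLoss ℓ t k = bestLoss (cumLoss ℓ t) →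
      cumLoss ℓ (t+1) k = bestLoss (cumLoss ℓ (t+1))) :
    mixGap ℓ t 0 = 0 := by
  have key : ∀ k ∈ leaders (cumLoss ℓ t), ℓ t k = mloss ℓ t 0 := by
    intro k hk
    have hkb : cumLoss ℓ t k = bestLoss (cumLoss ℓ t) := by simpa [leaders] using hk
    have h1 := h k hkb
    rw [cumLoss_succ, hkb] at h1
    rw [mloss_zero]
    linarith
  have hne := leaders_nonempty (cumLoss ℓ t)
  have hc : (0 : ℝ) < (leaders (cumLoss ℓ t)).card := by
    exact_mod_cast Finset.card_pos.mpr hne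
  have : hloss ℓ t 0 = mloss ℓ t 0 := by
    rw [hloss_zero, Finset.sum_congr rfl key, Finset.sum_const, nsmul_eq_mul]
    field_simp
  simp [mixGap, this]

end Aux

/-- Follow-the-Leader (Hedge with `η = ∞`, i.e. uniform weights on the current leaders):
its regret equals its cumulative mixability gap `Δ_T^{(∞)}`, which is at most the number
`C_T` of leader changes: rounds `t` with `t = 0` or some expert `k` with
`L_{t,k} = L*_t` but `L_{t+1,k} ≠ L*_{t+1}` (rounds indexed from `0`). -/
theorem ftl_regret_le_leader_changes (K : ℕ) [NeZero K] (T : ℕ)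
    (ℓ : ℕ → Fin K → ℝ) (hℓ : ∀ t k, ℓ t k ∈ Set.Icc (0 : ℝ) 1) :
    (∑ t ∈ Finset.range T, hloss ℓ t 0) - bestLoss (cumLoss ℓ T) =
      (∑ t ∈ Finset.range T, mixGap ℓ t 0) ∧
    (∑ t ∈ Finset.range T, hloss ℓ t 0) - bestLoss (cumLoss ℓ T) ≤
      ((Finset.range T).filter (fun t => t = 0 ∨ ∃ k : Fin K,
        cumLoss ℓ t k = bestLoss (cumLoss ℓ t) ∧
          cumLoss ℓ (t+1) k ≠ bestLoss (cumLoss ℓ (t+1)))).card := by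
  have bl0 : bestLoss (cumLoss ℓ 0) = 0 := by
    have h0 : cumLoss ℓ 0 = fun _ => 0 := by funext k; simp [cumLoss]
    rw [h0]; exact Finset.inf'_const _ _
  have hmsum : ∑ t ∈ Finset.range T, mloss ℓ t 0 = bestLoss (cumLoss ℓ T) := by
    have := Finset.sum_range_sub (fun t => bestLoss (cumLoss ℓ t)) T
    simp only [mloss_zero]
    rw [this, bl0, sub_zero]
  have heq : (∑ t ∈ Finset.range T, hloss ℓ t 0) - bestLoss (cumLoss ℓ T) =
      ∑ t ∈ Finset.range T, mixGap ℓ t 0 := by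
    simp only [mixGap, Finset.sum_sub_distrib, hmsum]
  refine ⟨heq, ?_⟩
  rw [heq]
  set p : ℕ → Prop := fun t => t = 0 ∨ ∃ k : Fin K,
    cumLoss ℓ t k = bestLoss (cumLoss ℓ t) ∧
      cumLoss ℓ (t+1) k ≠ bestLoss (cumLoss ℓ (t+1)) with hp
  have hsplit := Finset.sum_filter_add_sum_filter_not (Finset.range T) p
    (fun t => mixGap ℓ t 0)
  rw [← hsplit]
  have h2 : ∑ t ∈ (Finset.range T).filter (fun t => ¬ p t), mixGap ℓ t 0 = 0 := by
    apply Finset.sum_eq_zero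
    intro t ht
    have hnp : ¬ p t := (Finset.mem_filter.mp ht).2
    refine mixGap_zero_of_no_change ℓ t (fun k h1 => ?_)
    by_contra h2
    exact hnp (Or.inr ⟨k, h1, h2⟩)
  have h1 : ∑ t ∈ (Finset.range T).filter p, mixGap ℓ t 0 ≤
      ((Finset.range T).filter p).card := by
    calc ∑ t ∈ (Finset.range T).filter p, mixGap ℓ t 0
        ≤ ∑ _t ∈ (Finset.range T).filter p, (1 : ℝ) := by
          apply Finset.sum_le_sum
          intro t _
          have := hloss_zero_le_one ℓ hℓ t
          have := mloss_zero_nonneg ℓ hℓ t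
          simp only [mixGap]
          linarith
      _ = ((Finset.range T).filter p).card := by simp
  linarith

end
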